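/- Let q ≥ 3 and n ≥ 3, and let w ∈ A_q(n). Then every prefix u of w satisfies |u|_0 ≤ |u|_1, and every proper prefix u of w with |u| > ⌊n/2⌋ satisfies |u|_0 < |u|_1. -/

import Mathlib

/-- Value of a letter: 1 ↦ +1, 0 ↦ -1, other letters ↦ 0. -/
def mval (a : ℕ) : ℤ := if a = 1 then 1 else if a = 0 then -1 else 0

/-- Value-sum of a word. -/
def vsum (w : List ℕ) : ℤ := (w.map mval).sum

/-- A (q-2)-colored Motzkin word over the alphabet Z_q = {0,...,q-1}:
all letters < q, every prefix has nonnegative value-sum, total value-sum 0. -/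
def IsMotzkinWord (q : ℕ) (w : List ℕ) : Prop :=
  (∀ a ∈ w, a < q) ∧ (∀ u, u <+: w → 0 ≤ vsum u) ∧ vsum w = 0

/-- The set 𝓜_{q-2}(n) of (q-2)-colored Motzkin words of length n. -/
def MotzkinSet (q n : ℕ) : Set (List ℕ) := {w | w.length = n ∧ IsMotzkinWord q w}

/-- M_{q-2}(n), the number of (q-2)-colored Motzkin words of length n. -/
noncomputable def Mnum (q n : ℕ) : ℕ := (MotzkinSet q n).ncard

/-- The set Ê_{q-2}(n) of elevated (q-2)-colored Motzkin words of length n: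
words 1α0 with α ∈ 𝓜_{q-2}(n-2). -/
def ElevatedSet (q n : ℕ) : Set (List ℕ) :=
  {w | w.length = n ∧ ∃ α ∈ MotzkinSet q (n - 2), w = 1 :: (α ++ [0])}

/-- The set A_q(n). -/
def SetA (q n : ℕ) : Set (List ℕ) :=
  {w | ∃ i ≤ n / 2, ∃ α ∈ MotzkinSet q i, ∃ β ∈ ElevatedSet q (n - i), w = α ++ β} \
    {w | ∃ α ∈ ElevatedSet q (n / 2), ∃ β ∈ ElevatedSet q (n / 2), w = α ++ β}

/-- The set B_q(n). -/
def SetB (q n : ℕ) : Set (List ℕ) :=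
  {w | ∃ i ≤ n / 2 - 1, ∃ α ∈ MotzkinSet q i, ∃ β ∈ ElevatedSet q (n - i - 1),
    w = 1 :: (α ++ β)}

/-- The set C_q(n): words γ0 with γ a (q-2)-colored Motzkin word of length n-1
having no factor which is an elevated Motzkin word of length j ≥ ⌈n/2⌉. -/
def SetC (q n : ℕ) : Set (List ℕ) :=
  {w | ∃ γ ∈ MotzkinSet q (n - 1),
    (∀ j, (n + 1) / 2 ≤ j → ∀ β ∈ ElevatedSet q j, ¬ β <:+: γ) ∧ w = γ ++ [0]}

/-- The cross-bifix-free candidate set CBFS_q(n). -/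
def CBFS (q n : ℕ) : Set (List ℕ) := SetA q n ∪ SetB q n ∪ SetC q n

/-- A word is bifix-free if no nonempty proper prefix of it is also a suffix of it. -/
def BifixFree (w : List ℕ) : Prop :=
  ∀ u, u <+: w → u ≠ [] → u.length < w.length → ¬ u <:+ w

/-- BF_q(n): the set of bifix-free words of length n over Z_q. -/
def BF (q n : ℕ) : Set (List ℕ) := {w | w.length = n ∧ (∀ a ∈ w, a < q) ∧ BifixFree w}

/-- F_{k,q}(n): the number of words of length n over Z_q avoiding k consecutive 0's. -/
noncomputable def Fcount (k q n : ℕ) : ℕ :=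
  {w : List ℕ | w.length = n ∧ (∀ a ∈ w, a < q) ∧ ¬ List.replicate k 0 <:+: w}.ncard

/-- The set S_{k,q}(n) of Bajic--Stojanovic--Chee--Kiah type words: words s of length n
over Z_q with s₁ = ⋯ = s_k = 0, s_{k+1} ≠ 0, s_n ≠ 0, and such that the subword
s_{k+2} ⋯ s_{n-1} contains no k consecutive 0's. -/
def SetS (q k n : ℕ) : Set (List ℕ) :=
  {s | s.length = n ∧ (∀ a ∈ s, a < q) ∧ s.take k = List.replicate k 0 ∧
    s.getD k 0 ≠ 0 ∧ s.getLast? ≠ some 0 ∧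
    ¬ List.replicate k 0 <:+: (s.drop (k + 1)).take (n - k - 2)}


/-! Write `w = αβ` with `α` Motzkin of length `≤ ⌊n/2⌋` and `β = 1γ0` elevated, and read
`|u|₁ - |u|₀` as the value-sum of `u`. Since `α` sums to `0`, a prefix `αv` has the value-sum
of the prefix `v` of `β`; the leading `1` of `β` lifts every prefix of `γ`, so each nonempty
proper prefix of `β` has value-sum `≥ 1`. A prefix longer than `⌊n/2⌋` is longer than `α`. -/

@[simp]
lemma vsum_nil : vsum [] = 0 := rfl

@[simp]
lemma vsum_cons (a : ℕ) (w : List ℕ) : vsum (a :: w) = mval a + vsum w := by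
  simp [vsum]

@[simp]
lemma vsum_append (u v : List ℕ) : vsum (u ++ v) = vsum u + vsum v := by
  simp [vsum]

lemma vsum_eq_count_one_sub_count_zero (u : List ℕ) :
    vsum u = (u.count 1 : ℤ) - u.count 0 := by
  induction u with
  | nil => simp
  | cons a u ih =>
    rw [vsum_cons, ih]
    by_cases h1 : a = 1
    · subst h1; simp [mval]; ring
    by_cases h0 : a = 0
    · subst h0; simp [mval]; ring
    · simp [mval, h0, h1]

lemma count_zero_le_count_one_iff (u : List ℕ) : u.count 0 ≤ u.count 1 ↔ 0 ≤ vsum u := by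
  rw [vsum_eq_count_one_sub_count_zero]
  omega

lemma count_zero_lt_count_one_iff (u : List ℕ) : u.count 0 < u.count 1 ↔ 0 < vsum u := by
  rw [vsum_eq_count_one_sub_count_zero]
  omega

lemma List.prefix_or_eq_append_of_prefix_append {α : Type*} {u l₁ l₂ : List α}
    (h : u <+: l₁ ++ l₂) : u <+: l₁ ∨ ∃ v, v <+: l₂ ∧ u = l₁ ++ v := by
  rcases le_or_gt u.length l₁.length with hle | hlt
  · exact Or.inl (prefix_of_prefix_length_le h (prefix_append l₁ l₂) hle)
  · obtain ⟨v, rfl⟩ := prefix_of_prefix_length_le (prefix_append l₁ l₂) h hlt.le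
    exact Or.inr ⟨v, (prefix_append_right_inj l₁).mp h, rfl⟩

section Elevated

variable {γ : List ℕ} (hγ : ∀ u, u <+: γ → 0 ≤ vsum u)
include hγ

lemma vsum_pos_of_prefix_one_cons {v : List ℕ} (hv : v <+: 1 :: γ) (hne : v ≠ []) :
    0 < vsum v := by
  obtain rfl | ⟨t, rfl, ht⟩ := List.prefix_cons_iff.mp hv
  · exact absurd rfl hne
  · simp only [vsum_cons, mval, if_pos]
    linarith [hγ t ht]

lemma vsum_pos_of_prefix_elevated {v : List ℕ} (hv : v <+: 1 :: (γ ++ [0]))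
    (hne : v ≠ []) (hlt : v.length < (1 :: (γ ++ [0])).length) : 0 < vsum v := by
  rw [← List.cons_append, List.prefix_concat_iff] at hv
  obtain rfl | hv := hv
  · simp at hlt
  · exact vsum_pos_of_prefix_one_cons hγ hv hne

lemma vsum_nonneg_of_prefix_elevated (hsum : vsum γ = 0) {v : List ℕ}
    (hv : v <+: 1 :: (γ ++ [0])) : 0 ≤ vsum v := by
  rw [← List.cons_append, List.prefix_concat_iff] at hv
  obtain rfl | hv := hv
  · simp [mval, hsum]
  · rcases eq_or_ne v [] with rfl | hne
    · rfl
    · exact (vsum_pos_of_prefix_one_cons hγ hv hne).le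

end Elevated

section Concatenation

variable {α β u : List ℕ} (hα : vsum α = 0)
include hα

lemma vsum_nonneg_of_prefix_append (hαpre : ∀ u, u <+: α → 0 ≤ vsum u)
    (hβ : ∀ v, v <+: β → 0 ≤ vsum v) (hu : u <+: α ++ β) : 0 ≤ vsum u := by
  obtain hu | ⟨v, hv, rfl⟩ := List.prefix_or_eq_append_of_prefix_append hu
  · exact hαpre u hu
  · simpa [hα] using hβ v hv

lemma vsum_pos_of_prefix_append
    (hβ : ∀ v, v <+: β → v ≠ [] → v.length < β.length → 0 < vsum v)
    (hu : u <+: α ++ β) (hlong : α.length < u.length) (hshort : u.length < (α ++ β).length) :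
    0 < vsum u := by
  obtain hu | ⟨v, hv, rfl⟩ := List.prefix_or_eq_append_of_prefix_append hu
  · exact absurd hu.length_le hlong.not_ge
  · simp only [List.length_append] at hlong hshort
    simpa [hα] using hβ v hv (by rintro rfl; simp at hlong) (by omega)

end Concatenation

theorem setA_prefix_counts_general (q n : ℕ)
    (w : List ℕ) (hw : w ∈ SetA q n) :
    (∀ u, u <+: w → u.count 0 ≤ u.count 1) ∧
    (∀ u, u <+: w → u.length < w.length → n / 2 < u.length → u.count 0 < u.count 1) := by
  obtain ⟨⟨i, hi, α, ⟨rfl, -, hαpre, hα⟩, β, ⟨-, γ, ⟨-, -, hγpre, hγ⟩, rfl⟩, rfl⟩, -⟩ := hw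
  have hβ_nonneg := fun v ↦ vsum_nonneg_of_prefix_elevated hγpre hγ (v := v)
  have hβ_pos := fun v ↦ vsum_pos_of_prefix_elevated hγpre (v := v)
  refine ⟨fun u hu ↦ ?_, fun u hu hshort hlong ↦ ?_⟩
  · exact (count_zero_le_count_one_iff u).mpr
      (vsum_nonneg_of_prefix_append hα hαpre hβ_nonneg hu)
  · exact (count_zero_lt_count_one_iff u).mpr
      (vsum_pos_of_prefix_append hα hβ_pos hu (by omega) hshort)

/-- For w ∈ A_q(n), every prefix u of w satisfies |u|₀ ≤ |u|₁, and every
proper prefix u with |u| > ⌊n/2⌋ satisfies |u|₀ < |u|₁. -/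
theorem setA_prefix_counts (q n : ℕ) (hq : 3 ≤ q) (hn : 3 ≤ n)
    (w : List ℕ) (hw : w ∈ SetA q n) :
    (∀ u, u <+: w → u.count 0 ≤ u.count 1) ∧
    (∀ u, u <+: w → u.length < w.length → n / 2 < u.length → u.count 0 < u.count 1) :=
  setA_prefix_counts_general q n w hw
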